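/- arXiv:2410.01422 — 2 statements merged into one kernel-verified Lean document; each statement's English description precedes it below -/
import Mathlib

section
/- Let n_2 be a positive even integer with minimal hyperbinary expansion 𝐧_2, let s be the number of short hyperbinary expansions of n_2, and let a be a positive integer. (i) If 𝐧_1 = 1^{a−1}2 is a block of type 1 of length a ≥ 2 and n is the integer whose hyperbinary expansion is the concatenation 𝐧_1𝐧_2, then b(n) = a·b(n_2) + s and the number of short hyperbinary expansions of n is (a−1)·b(n_2) + s. (ii) If 𝐧_1 = 2^a is a block of type 2 of length a and n is the integer whose hyperbinary expansion is the concatenation 𝐧_1𝐧_2, then b(n) = b(n_2) + a·s and the number of short hyperbinary expansions of n is s. -/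
/-- The value of a word over the digits `{0,1,2}`, read as a (hyper)binary expansion:
`wordVal (x₀ … x_k) = Σ x_i · 2^(k-i)`. -/
def wordVal : List ℕ → ℕ
  | [] => 0
  | d :: w => d * 2 ^ w.length + wordVal w

/-- `Hyp n` is the set of hyperbinary expansions of `n`: words over `{0,1,2}` with
nonzero leading digit whose value is `n` (the empty word is the unique expansion of `0`). -/
def Hyp (n : ℕ) : Set (List ℕ) :=
  {w | (∀ d ∈ w, d ≤ 2) ∧ w.head? ≠ some 0 ∧ wordVal w = n}

/-- Single-step reduction of type `→` : `(x02y, x10y)` or `(2y, 10y)`. -/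
def StepArrow (a b : List ℕ) : Prop :=
  (∃ x y : List ℕ, a = x ++ 0 :: 2 :: y ∧ b = x ++ 1 :: 0 :: y) ∨
    (∃ y : List ℕ, a = 2 :: y ∧ b = 1 :: 0 :: y)

/-- Single-step reduction of type `↠` : `(x12y, x20y)`. -/
def StepDouble (a b : List ℕ) : Prop :=
  ∃ x y : List ℕ, a = x ++ 1 :: 2 :: y ∧ b = x ++ 2 :: 0 :: y

/-- A single-step reduction (of either type). -/
def Step (a b : List ℕ) : Prop := StepArrow a b ∨ StepDouble a b

/-- `bFun n` is the number of hyperbinary expansions of `n`. -/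
noncomputable def bFun (n : ℕ) : ℕ := (Hyp n).ncard

/-- The set of arcs of the graph `A(n)`: labeled single-step reductions between
hyperbinary expansions of `n`. -/
def arcs (n : ℕ) : Set (List ℕ × List ℕ) :=
  {p | p.1 ∈ Hyp n ∧ p.2 ∈ Hyp n ∧ Step p.1 p.2}

/-- `aFun n` is the number of arcs of `A(n)`. -/
noncomputable def aFun (n : ℕ) : ℕ := (arcs n).ncard

/-- The cyclomatic number `v(n) = a(n) - b(n) + 1` of the connected graph `A(n)`. -/
noncomputable def vFun (n : ℕ) : ℕ := aFun n + 1 - bFun n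

/-- The number of short hyperbinary expansions of a positive integer `m`:
expansions strictly shorter than the ordinary binary expansion of `m`. -/
noncomputable def shortCount (m : ℕ) : ℕ :=
  {w ∈ Hyp m | w.length < Nat.size m}.ncard

def st : ℕ → ℕ
  | 0 => 0
  | 1 => 1
  | n+2 =>
    if h : (n+2) % 2 = 0 then st ((n+2)/2)
    else st ((n+2)/2) + st ((n+2)/2 + 1)
  decreasing_by all_goals omega

lemma st_even (m : ℕ) : st (2*m) = st m := by
  match m with
  | 0 => rfl
  | m+1 =>
    rw [show 2*(m+1) = (2*m)+2 by ring, st]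
    have h : ((2*m)+2) % 2 = 0 := by omega
    rw [dif_pos h]
    congr 1; omega

lemma st_odd (m : ℕ) : st (2*m+1) = st m + st (m+1) := by
  match m with
  | 0 => simp [st]
  | m+1 =>
    rw [show 2*(m+1)+1 = (2*m+1)+2 by ring, st]
    have h : ¬ ((2*m+1)+2) % 2 = 0 := by omega
    rw [dif_neg h]
    congr 2 <;> omega

lemma st_zero : st 0 = 0 := st.eq_1
lemma st_one : st 1 = 1 := st.eq_2
lemma st_two : st 2 = 1 := by rw [show 2 = 2*1 by ring, st_even, st_one]

lemma st_two_pow (j : ℕ) : st (2^j) = 1 := by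
  induction j with
  | zero => exact st_one
  | succ j ih => rw [pow_succ, mul_comm, st_even, ih]

lemma st_two_pow_sub_one (j : ℕ) : st (2^j - 1) = j := by
  induction j with
  | zero => exact st_zero
  | succ j ih =>
    have h1 : (1:ℕ) ≤ 2^j := Nat.one_le_two_pow
    rw [show 2^(j+1) - 1 = 2*(2^j - 1) + 1 by rw [pow_succ]; omega, st_odd, ih,
      show 2^j - 1 + 1 = 2^j by omega, st_two_pow]

lemma st_two_pow_add_one (j : ℕ) : st (2^j + 1) = j + 1 := by
  induction j with
  | zero => exact st_two
  | succ j ih =>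
    rw [show 2^(j+1) + 1 = 2*(2^j) + 1 by rw [pow_succ]; ring, st_odd, st_two_pow, ih]; omega

lemma st_two_pow_add_two (j : ℕ) (hj : 1 ≤ j) : st (2^j + 2) = j := by
  obtain ⟨i, rfl⟩ : ∃ i, j = i + 1 := ⟨j - 1, by omega⟩
  rw [show 2^(i+1) + 2 = 2*(2^i + 1) by rw [pow_succ]; ring, st_even, st_two_pow_add_one]

lemma st_key : ∀ k v, v < 2^k → ∃ p q r t : ℕ, ∀ u,
    st (u * 2^k + v + 1) = p * st (u+1) + q * st u ∧
    st (u * 2^k + v) = r * st (u+1) + t * st u := by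
  intro k
  induction k with
  | zero =>
    intro v hv
    interval_cases v
    exact ⟨1, 0, 0, 1, fun u => by simp⟩
  | succ k ih =>
    intro v hv
    obtain ⟨p, q, r, t, h⟩ := ih (v / 2) (by omega)
    rcases Nat.even_or_odd v with ⟨v', hv'⟩ | ⟨v', hv'⟩
    · refine ⟨p + r, q + t, r, t, fun u => ?_⟩
      have hx : u * 2^(k+1) + v = 2 * (u * 2^k + v/2) := by
        have h2 : u * 2^(k+1) = 2 * (u * 2^k) := by rw [pow_succ]; ring
        omega
      constructor
      · rw [show u * 2^(k+1) + v + 1 = 2 * (u * 2^k + v/2) + 1 by omega, st_odd,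
          (h u).1, (h u).2]; ring
      · rw [hx, st_even, (h u).2]
    · refine ⟨p, q, p + r, q + t, fun u => ?_⟩
      have hx : u * 2^(k+1) + v = 2 * (u * 2^k + v/2) + 1 := by
        have h2 : u * 2^(k+1) = 2 * (u * 2^k) := by rw [pow_succ]; ring
        omega
      constructor
      · rw [show u * 2^(k+1) + v + 1 = 2 * ((u * 2^k + v/2) + 1) by omega, st_even, (h u).1]
      · rw [hx, st_odd, (h u).1, (h u).2]; ring

lemma wordVal_append (xs ys : List ℕ) :
    wordVal (xs ++ ys) = wordVal xs * 2 ^ ys.length + wordVal ys := by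
  induction xs with
  | nil => simp [wordVal]
  | cons d w ih =>
    simp only [List.cons_append, wordVal, List.append_eq, List.length_append, ih, pow_add]
    ring

lemma wordVal_concat (w : List ℕ) (d : ℕ) : wordVal (w ++ [d]) = 2 * wordVal w + d := by
  rw [wordVal_append]; simp [wordVal]; ring

lemma wordVal_le (w : List ℕ) (h : ∀ d ∈ w, d ≤ 2) : wordVal w ≤ 2^(w.length+1) - 2 := by
  induction w with
  | nil => simp [wordVal]
  | cons d w ih =>
    have hd : d ≤ 2 := h d (by simp)
    have ihw := ih (fun x hx => h x (by simp [hx]))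
    simp only [wordVal, List.length_cons]
    have h1 : (1:ℕ) ≤ 2 ^ w.length := Nat.one_le_two_pow
    have : (2:ℕ)^(w.length+1+1) = 4 * 2^w.length := by ring
    have h2 : (2:ℕ)^(w.length+1) = 2 * 2^w.length := by ring
    have h4 : d * 2^w.length ≤ 2 * 2^w.length := Nat.mul_le_mul_right _ hd
    omega

lemma wordVal_ge (w : List ℕ) (h : ∀ d ∈ w, 1 ≤ d) : 2^(w.length) - 1 ≤ wordVal w := by
  induction w with
  | nil => simp [wordVal]
  | cons d w ih =>
    have hd : 1 ≤ d := h d (by simp)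
    have ihw := ih (fun x hx => h x (by simp [hx]))
    simp only [wordVal, List.length_cons]
    have h1 : (1:ℕ) ≤ 2 ^ w.length := Nat.one_le_two_pow
    have h2 : (2:ℕ)^(w.length+1) = 2 * 2^w.length := by ring
    have h3 : d * 2 ^ w.length ≥ 1 * 2 ^ w.length := Nat.mul_le_mul_right _ hd
    omega

lemma wordVal_replicate_one (t : ℕ) : wordVal (List.replicate t 1) = 2^t - 1 := by
  induction t with
  | zero => simp [wordVal]
  | succ t ih =>
    rw [List.replicate_succ]
    simp only [wordVal, List.length_replicate, ih]
    have h1 : (1:ℕ) ≤ 2 ^ t := Nat.one_le_two_pow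
    have h2 : (2:ℕ)^(t+1) = 2 * 2^t := by ring
    omega

lemma wordVal_replicate_two (t : ℕ) : wordVal (List.replicate t 2) = 2^(t+1) - 2 := by
  induction t with
  | zero => simp [wordVal]
  | succ t ih =>
    rw [List.replicate_succ]
    simp only [wordVal, List.length_replicate, ih]
    have h1 : (1:ℕ) ≤ 2 ^ t := Nat.one_le_two_pow
    have h2 : (2:ℕ)^(t+1) = 2 * 2^t := by ring
    have h3 : (2:ℕ)^(t+1+1) = 4 * 2^t := by ring
    omega

lemma wordVal_replicate_zero (t : ℕ) : wordVal (List.replicate t 0) = 0 := by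
  induction t with
  | zero => simp [wordVal]
  | succ t ih => rw [List.replicate_succ]; simp [wordVal, ih]

lemma head?_concat (w : List ℕ) (d : ℕ) (hw : w ≠ []) : (w ++ [d]).head? = w.head? := by
  cases w with
  | nil => exact absurd rfl hw
  | cons x xs => simp

lemma concat_injective (d : ℕ) : Function.Injective (fun w : List ℕ => w ++ [d]) := by
  intro a b h
  simpa using List.append_inj_left' h (by simp)

lemma hyp_zero : Hyp 0 = {[]} := by
  ext w
  constructor
  · rintro ⟨hd, hh, hv⟩
    cases w with
    | nil => rfl
    | cons x xs =>
      exfalso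
      simp only [wordVal] at hv
      have hx : x ≠ 0 := by simpa using hh
      have : (1:ℕ) ≤ 2 ^ xs.length := Nat.one_le_two_pow
      have : 1 * 2 ^ xs.length ≤ x * 2 ^ xs.length := Nat.mul_le_mul_right _ (by omega)
      omega
  · rintro rfl
    exact ⟨by simp, by simp, rfl⟩

lemma mem_hyp_concat (w : List ℕ) (d m : ℕ) (hw : w ∈ Hyp m) (hd : d ≤ 2)
    (hne : d ≠ 0 ∨ w ≠ []) : w ++ [d] ∈ Hyp (2 * m + d) := by
  obtain ⟨h1, h2, h3⟩ := hw
  refine ⟨?_, ?_, by rw [wordVal_concat, h3]⟩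
  · intro x hx
    rcases List.mem_append.1 hx with h | h
    · exact h1 x h
    · simp at h; omega
  · cases w with
    | nil =>
      simp only [List.nil_append, List.head?_cons]
      rcases hne with h | h
      · simpa using h
      · exact absurd rfl h
    | cons x xs => rw [head?_concat _ _ (by simp)]; exact h2

lemma hyp_ne_nil {n : ℕ} {w : List ℕ} (hn : 0 < n) (hw : w ∈ Hyp n) : w ≠ [] := by
  rintro rfl
  have := hw.2.2
  simp [wordVal] at this
  omega

lemma hyp_split {n : ℕ} {w : List ℕ} (hn : 0 < n) (hw : w ∈ Hyp n) :
    ∃ w' d, w = w' ++ [d] ∧ d ≤ 2 ∧ 2 * wordVal w' + d = n ∧ w' ∈ Hyp (wordVal w') := by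
  obtain ⟨h1, h2, h3⟩ := hw
  rcases List.eq_nil_or_concat w with rfl | ⟨w', d, hwd⟩
  · exact absurd rfl (hyp_ne_nil hn ⟨h1, h2, h3⟩)
  rw [List.concat_eq_append] at hwd
  subst hwd
  refine ⟨w', d, rfl, h1 d (by simp), by rw [wordVal_concat] at h3; omega, ?_, ?_, rfl⟩
  · intro x hx; exact h1 x (by simp [hx])
  · cases w' with
    | nil => simp
    | cons x xs => rw [head?_concat _ _ (by simp)] at h2; exact h2

lemma hyp_odd (m : ℕ) : Hyp (2*m+1) = (fun w => w ++ [1]) '' Hyp m := by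
  ext w
  constructor
  · intro hw
    obtain ⟨w', d, rfl, hd, hv, hw'⟩ := hyp_split (by omega) hw
    have hd1 : d = 1 := by omega
    subst hd1
    have hm : wordVal w' = m := by omega
    exact ⟨w', by rwa [hm] at hw', rfl⟩
  · rintro ⟨w', hw', rfl⟩
    have := mem_hyp_concat w' 1 m hw' (by omega) (Or.inl (by omega))
    simpa using this

lemma hyp_even (m : ℕ) (hm : 1 ≤ m) :
    Hyp (2*m) = (fun w => w ++ [0]) '' Hyp m ∪ (fun w => w ++ [2]) '' Hyp (m-1) := by
  ext w
  constructor
  · intro hw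
    obtain ⟨w', d, rfl, hd, hv, hw'⟩ := hyp_split (by omega) hw
    have : d = 0 ∨ d = 2 := by omega
    rcases this with rfl | rfl
    · have hm' : wordVal w' = m := by omega
      exact Or.inl ⟨w', by rwa [hm'] at hw', rfl⟩
    · have hm' : wordVal w' = m - 1 := by omega
      exact Or.inr ⟨w', by rwa [hm'] at hw', rfl⟩
  · rintro (⟨w', hw', rfl⟩ | ⟨w', hw', rfl⟩)
    · have hne : w' ≠ [] := hyp_ne_nil hm hw'
      have := mem_hyp_concat w' 0 m hw' (by omega) (Or.inr hne)
      simpa using this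
    · have := mem_hyp_concat w' 2 (m-1) hw' (by omega) (Or.inl (by omega))
      have h2 : 2 * (m-1) + 2 = 2 * m := by omega
      rwa [h2] at this

lemma hyp_spec : ∀ n, (Hyp n).Finite ∧ (Hyp n).ncard = st (n+1) := by
  intro n
  induction n using Nat.strong_induction_on with
  | _ n ih =>
    rcases Nat.even_or_odd n with ⟨m, hm⟩ | ⟨m, hm⟩
    · rcases Nat.eq_zero_or_pos m with rfl | hmpos
      · have h0 : n = 0 := by omega
        subst h0
        rw [hyp_zero]
        exact ⟨Set.finite_singleton _, by rw [Set.ncard_singleton, st_one]⟩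
      · have hn : n = 2 * m := by omega
        subst hn
        obtain ⟨hf1, hc1⟩ := ih m (by omega)
        obtain ⟨hf2, hc2⟩ := ih (m-1) (by omega)
        rw [hyp_even m hmpos]
        have hdisj : Disjoint ((fun w => w ++ [0]) '' Hyp m) ((fun w => w ++ [2]) '' Hyp (m-1)) := by
          rw [Set.disjoint_left]
          rintro w ⟨a, _, rfl⟩ ⟨b, _, hb⟩
          have := (List.append_inj' hb.symm (by simp)).2
          simp at this
        constructor
        · exact (hf1.image _).union (hf2.image _)
        · rw [Set.ncard_union_eq hdisj (hf1.image _) (hf2.image _),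
            Set.ncard_image_of_injective _ (concat_injective 0),
            Set.ncard_image_of_injective _ (concat_injective 2), hc1, hc2,
            show 2*m+1 = 2*m+1 from rfl, st_odd]
          have : m - 1 + 1 = m := by omega
          rw [this]
          omega
    · have hn : n = 2 * m + 1 := by omega
      subst hn
      obtain ⟨hf1, hc1⟩ := ih m (by omega)
      rw [hyp_odd m]
      refine ⟨hf1.image _, ?_⟩
      rw [Set.ncard_image_of_injective _ (concat_injective 1), hc1,
        show 2*m+1+1 = 2*(m+1) from by ring, st_even]

lemma hyp_finite (n : ℕ) : (Hyp n).Finite := (hyp_spec n).1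

lemma bFun_eq_st (n : ℕ) : bFun n = st (n+1) := (hyp_spec n).2

lemma hyp_length_le {n : ℕ} {w : List ℕ} (hw : w ∈ Hyp n) : w.length ≤ Nat.size n := by
  cases w with
  | nil => simp
  | cons d rest =>
    obtain ⟨h1, h2, h3⟩ := hw
    have hd : 1 ≤ d := by
      have : d ≠ 0 := by simpa using h2
      omega
    simp only [wordVal] at h3
    have : 1 * 2 ^ rest.length ≤ d * 2 ^ rest.length := Nat.mul_le_mul_right _ hd
    have hle : 2 ^ rest.length ≤ n := by omega
    have := Nat.lt_size.mpr hle
    simpa using this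

lemma strip_zeros : ∀ z : List ℕ, ∃ j z', z = List.replicate j 0 ++ z' ∧
    z'.head? ≠ some 0 ∧ wordVal z' = wordVal z := by
  intro z
  induction z with
  | nil => exact ⟨0, [], by simp, by simp, rfl⟩
  | cons x xs ih =>
    rcases Nat.eq_zero_or_pos x with rfl | hx
    · obtain ⟨j, z', hz, hh, hv⟩ := ih
      exact ⟨j+1, z', by rw [List.replicate_succ]; simp [hz], hh, by simp [wordVal, hv]⟩
    · exact ⟨0, x :: xs, by simp, by simp; omega, rfl⟩

lemma replicate_zero_cancel : ∀ a b : ℕ, ∀ w₁ w₂ : List ℕ,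
    List.replicate a 0 ++ w₁ = List.replicate b 0 ++ w₂ →
    w₁.head? ≠ some 0 → w₂.head? ≠ some 0 → w₁ = w₂ := by
  intro a
  induction a with
  | zero =>
    intro b w₁ w₂ h h1 h2
    cases b with
    | zero => simpa using h
    | succ b =>
      simp only [List.replicate_succ, List.replicate, List.nil_append, List.cons_append] at h
      subst h
      simp at h1
  | succ a ih =>
    intro b w₁ w₂ h h1 h2
    cases b with
    | zero =>
      simp only [List.replicate_succ, List.replicate, List.nil_append, List.cons_append] at h
      rw [← h] at h2
      simp at h2
    | succ b =>
      simp only [List.replicate_succ, List.cons_append, List.cons.injEq] at h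
      exact ih b w₁ w₂ h.2 h1 h2

lemma bFun_short (n : ℕ) (hn : 0 < n) :
    bFun n = shortCount n + bFun (n - 2^(Nat.size n - 1)) := by
  set L := Nat.size n with hL
  have hL1 : 1 ≤ L := Nat.size_pos.mpr hn
  set t := n - 2^(L-1) with htdef
  have hnlt : n < 2^L := Nat.lt_size_self n
  have hnge : 2^(L-1) ≤ n := Nat.lt_size.mp (by omega)
  have h2L : 2^L = 2 * 2^(L-1) := by
    rw [← pow_succ', Nat.sub_add_cancel hL1]
  have htlt : t < 2^(L-1) := by omega
  have hsizet : Nat.size t ≤ L - 1 := Nat.size_le.mpr htlt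
  set φ : List ℕ → List ℕ := fun w => 1 :: (List.replicate (L - 1 - w.length) 0 ++ w) with hφ
  have hlen : ∀ w ∈ Hyp t, w.length ≤ L - 1 := fun w hw => le_trans (hyp_length_le hw) hsizet
  have hF : {w ∈ Hyp n | ¬ w.length < L} = φ '' Hyp t := by
    ext w
    constructor
    · rintro ⟨hw, hlw⟩
      have hwL : w.length = L := le_antisymm (hyp_length_le hw) (by omega)
      obtain ⟨h1, h2, h3⟩ := hw
      cases w with
      | nil => simp only [List.length_nil] at hwL; omega
      | cons d rest =>
        have hd2 : d ≤ 2 := h1 d (by simp)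
        have hd0 : d ≠ 0 := by simpa using h2
        simp only [wordVal] at h3
        have hrl : rest.length = L - 1 := by simp at hwL; omega
        have hd1 : d = 1 := by
          rcases (by omega : d = 1 ∨ d = 2) with h | h
          · exact h
          · exfalso; rw [h, hrl] at h3; omega
        subst hd1
        rw [hrl] at h3
        have hvrest : wordVal rest = t := by omega
        obtain ⟨j, z', hz, hh, hv⟩ := strip_zeros rest
        have hz' : z' ∈ Hyp t := by
          refine ⟨fun x hx => h1 x (by simp [hz, hx]), hh, by rw [hv, hvrest]⟩
        refine ⟨z', hz', ?_⟩
        have hjl : j + z'.length = L - 1 := by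
          have := congrArg List.length hz
          simp at this; omega
        simp only [hφ]
        rw [show L - 1 - z'.length = j by omega, ← hz]
    · rintro ⟨w, hw, rfl⟩
      have hwl := hlen w hw
      obtain ⟨h1, h2, h3⟩ := hw
      have hlenφ : (List.replicate (L - 1 - w.length) 0 ++ w).length = L - 1 := by
        simp; omega
      refine ⟨⟨?_, by simp [hφ], ?_⟩, ?_⟩
      · intro x hx
        simp only [hφ, List.mem_cons, List.mem_append, List.mem_replicate] at hx
        rcases hx with rfl | h | h
        · omega
        · omega
        · exact h1 x h
      · simp only [hφ, wordVal, hlenφ]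
        rw [wordVal_append, wordVal_replicate_zero, h3]
        omega
      · simp only [hφ, List.length_cons, hlenφ]
        omega
  have hinj : Set.InjOn φ (Hyp t) := by
    intro w₁ h₁ w₂ h₂ he
    simp only [hφ, List.cons.injEq] at he
    exact replicate_zero_cancel _ _ _ _ he.2 h₁.2.1 h₂.2.1
  have hsplit : Hyp n = {w ∈ Hyp n | w.length < L} ∪ {w ∈ Hyp n | ¬ w.length < L} := by
    ext w; by_cases h : w.length < L
    · simp [h]
    · simp [h]; intro _; omega
  have hfin := hyp_finite n
  have hf1 : {w ∈ Hyp n | w.length < L}.Finite := hfin.subset (fun w hw => hw.1)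
  have hf2 : {w ∈ Hyp n | ¬ w.length < L}.Finite := hfin.subset (fun w hw => hw.1)
  have hdisj : Disjoint {w ∈ Hyp n | w.length < L} {w ∈ Hyp n | ¬ w.length < L} := by
    rw [Set.disjoint_left]
    rintro w ⟨_, h⟩ ⟨_, h'⟩
    exact h' h
  calc bFun n = ({w ∈ Hyp n | w.length < L} ∪ {w ∈ Hyp n | ¬ w.length < L}).ncard := by
        rw [bFun, ← hsplit]
    _ = {w ∈ Hyp n | w.length < L}.ncard + {w ∈ Hyp n | ¬ w.length < L}.ncard :=
        Set.ncard_union_eq hdisj hf1 hf2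
    _ = shortCount n + bFun t := by
        rw [shortCount, hF, Set.ncard_image_of_injOn hinj, bFun]


/-- Let `n₂` be a positive even integer with minimal hyperbinary expansion `w₂` and
`s` its number of short expansions, and let `a` be a positive integer.
(i) If `n` has hyperbinary expansion `1^(a-1)2 ++ w₂` (block of type 1, length `a ≥ 2`),
then `b(n) = a·b(n₂) + s` and `n` has `(a−1)·b(n₂) + s` short expansions.
(ii) If `n` has hyperbinary expansion `2^a ++ w₂` (block of type 2, length `a`),
then `b(n) = b(n₂) + a·s` and `n` has `s` short expansions. -/
theorem b_block_concat (n₂ : ℕ) (h₂pos : 0 < n₂) (h₂even : Even n₂)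
    (w₂ : List ℕ) (hw₂ : w₂ ∈ Hyp n₂) (hw₂min : 0 ∉ w₂)
    (s : ℕ) (hs : s = shortCount n₂)
    (a : ℕ) (ha : 0 < a) :
    (∀ n : ℕ, 2 ≤ a → (List.replicate (a - 1) 1 ++ [2]) ++ w₂ ∈ Hyp n →
      bFun n = a * bFun n₂ + s ∧ shortCount n = (a - 1) * bFun n₂ + s) ∧
    (∀ n : ℕ, List.replicate a 2 ++ w₂ ∈ Hyp n →
      bFun n = bFun n₂ + a * s ∧ shortCount n = s) := by
  set k := w₂.length with hkdef
  have hk1 : 1 ≤ k := by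
    have := hyp_ne_nil h₂pos hw₂
    have := List.length_pos_iff.mpr this
    omega
  have hub : n₂ ≤ 2^(k+1) - 2 := by
    have := wordVal_le w₂ hw₂.1
    rw [hw₂.2.2] at this
    exact this
  have hlb : 2^k ≤ n₂ := by
    have hge := wordVal_ge w₂ (fun d hd => by
      have : d ≠ 0 := fun h => hw₂min (h ▸ hd)
      omega)
    rw [hw₂.2.2, ← hkdef] at hge
    obtain ⟨c, hc⟩ := h₂even
    have h2k : 2^k = 2 * 2^(k-1) := by rw [← pow_succ', Nat.sub_add_cancel hk1]
    omega
  have h2k1 : (2:ℕ)^(k+1) = 2 * 2^k := by rw [pow_succ]; ring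
  have hsize : Nat.size n₂ = k + 1 := by
    have h1 : Nat.size n₂ ≤ k + 1 := Nat.size_le.mpr (by omega)
    have h2 : k < Nat.size n₂ := Nat.lt_size.mpr hlb
    omega
  set t := n₂ - 2^k with htdef
  have htlt : t < 2^k := by omega
  obtain ⟨p, q, r, r', hkey⟩ := st_key k t htlt
  have hb₂ : bFun n₂ = p + q := by
    have h := (hkey 1).1
    rw [one_mul, st_two, st_one] at h
    rw [bFun_eq_st, show n₂ + 1 = 2^k + t + 1 by omega, h]
    ring
  have hbt : bFun t = p := by
    have h := (hkey 0).1
    rw [zero_mul, zero_add, st_one, st_zero] at h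
    rw [bFun_eq_st, h]
    ring
  have hsh : bFun n₂ = shortCount n₂ + bFun t := by
    have h := bFun_short n₂ h₂pos
    rwa [hsize, Nat.add_sub_cancel] at h
  have hsq : s = q := by omega
  have h2a : (2:ℕ) ≤ 2^a := by
    calc (2:ℕ) = 2^1 := by ring
    _ ≤ 2^a := Nat.pow_le_pow_right (by omega) ha
  have hpowak : (2:ℕ)^(a+k) = 2^a * 2^k := pow_add 2 a k
  have hpowak1 : (2:ℕ)^(a+k+1) = 2 * (2^a * 2^k) := by
    rw [show a+k+1 = (a+1)+k by ring, pow_add, pow_succ]; ring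
  constructor
  · intro n ha2 hmem
    have hblock : wordVal (List.replicate (a-1) 1 ++ [2]) = 2^a := by
      rw [wordVal_concat, wordVal_replicate_one]
      have h1 : (1:ℕ) ≤ 2^(a-1) := Nat.one_le_two_pow
      have h2 : (2:ℕ)^a = 2 * 2^(a-1) := by rw [← pow_succ', Nat.sub_add_cancel (by omega)]
      omega
    have hn : n = 2^a * 2^k + n₂ := by
      rw [← hmem.2.2, wordVal_append, hblock, hw₂.2.2, hkdef]
    have harith : n = (2^a + 1) * 2^k + t := by
      have h1 : (2^a+1) * 2^k = 2^a * 2^k + 2^k := by ring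
      omega
    have hbn : bFun n = p * a + q * (a+1) := by
      have h := (hkey (2^a + 1)).1
      rw [show 2^a + 1 + 1 = 2^a + 2 by ring, st_two_pow_add_two a (by omega),
        st_two_pow_add_one] at h
      rw [bFun_eq_st, show n + 1 = (2^a+1) * 2^k + t + 1 by omega, h]
    have hB : bFun n = a * bFun n₂ + q := by rw [hbn, hb₂]; ring
    have hsizen : Nat.size n = a + k + 1 := by
      have hge : 2^(a+k) ≤ n := by
        have : 2^a * 2^k ≤ n := by omega
        omega
      have hlt : n < 2^(a+k+1) := by
        have h22 : 2 * 2^k ≤ 2^a * 2^k := Nat.mul_le_mul_right _ h2a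
        omega
      have h1 : Nat.size n ≤ a + k + 1 := Nat.size_le.mpr hlt
      have h2 : a + k < Nat.size n := Nat.lt_size.mpr hge
      omega
    have hnpos : 0 < n := by omega
    have hshn : bFun n = shortCount n + bFun n₂ := by
      have h := bFun_short n hnpos
      rwa [hsizen, Nat.add_sub_cancel, show n - 2^(a+k) = n₂ by omega] at h
    refine ⟨by rw [hB, hsq], ?_⟩
    obtain ⟨a', rfl⟩ : ∃ a', a = a' + 1 := ⟨a - 1, by omega⟩
    have e2 : bFun n = a' * bFun n₂ + q + bFun n₂ := by rw [hB]; ring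
    have : shortCount n = a' * bFun n₂ + q := by omega
    rw [this, hsq, Nat.add_sub_cancel]
  · intro n hmem
    have hblock : wordVal (List.replicate a 2) = 2^(a+1) - 2 := wordVal_replicate_two a
    have hn : n = (2^(a+1) - 2) * 2^k + n₂ := by
      rw [← hmem.2.2, wordVal_append, hblock, hw₂.2.2, hkdef]
    have hp1 : (2:ℕ)^(a+1) = 2 * 2^a := by rw [pow_succ]; ring
    have hp2 : (2:ℕ)^(a+1) * 2^k = 2 * (2^a * 2^k) := by rw [hp1]; ring
    have hk2 : (1:ℕ) ≤ 2^k := Nat.one_le_two_pow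
    have h2a1 : (2:ℕ) ≤ 2^(a+1) := by omega
    have hm1 : ((2:ℕ)^(a+1) - 1) * 2^k + 2^k = 2^(a+1) * 2^k := by
      calc ((2:ℕ)^(a+1)-1)*2^k + 2^k = (2^(a+1)-1+1)*2^k := by ring
      _ = 2^(a+1)*2^k := by rw [show (2:ℕ)^(a+1)-1+1 = 2^(a+1) by omega]
    have hm2 : ((2:ℕ)^(a+1) - 2) * 2^k + 2 * 2^k = 2^(a+1) * 2^k := by
      calc ((2:ℕ)^(a+1)-2)*2^k + 2*2^k = (2^(a+1)-2+2)*2^k := by ring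
      _ = 2^(a+1)*2^k := by rw [show (2:ℕ)^(a+1)-2+2 = 2^(a+1) by omega]
    have hm3 : ((2:ℕ)^a - 1) * 2^k + 2^k = 2^a * 2^k := by
      calc ((2:ℕ)^a-1)*2^k + 2^k = (2^a-1+1)*2^k := by ring
      _ = 2^a*2^k := by rw [show (2:ℕ)^a-1+1 = 2^a by omega]
    have hgC : (2:ℕ)^k ≤ 2^a * 2^k := Nat.le_mul_of_pos_left _ (by positivity)
    have harith : n = (2^(a+1) - 1) * 2^k + t := by omega
    have hbn : bFun n = p + q * (a+1) := by
      have h := (hkey (2^(a+1) - 1)).1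
      rw [show 2^(a+1) - 1 + 1 = 2^(a+1) by omega, st_two_pow, st_two_pow_sub_one] at h
      rw [bFun_eq_st, show n + 1 = (2^(a+1)-1) * 2^k + t + 1 by omega, h]
      ring
    have hsizen : Nat.size n = a + k + 1 := by
      have hge : 2^(a+k) ≤ n := by omega
      have hlt : n < 2^(a+k+1) := by omega
      have h1 : Nat.size n ≤ a + k + 1 := Nat.size_le.mpr hlt
      have h2 : a + k < Nat.size n := Nat.lt_size.mpr hge
      omega
    have hnpos : 0 < n := by omega
    have hsub : n - 2^(a+k) = (2^a - 1) * 2^k + t := by omega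
    have hbsub : bFun (n - 2^(a+k)) = p + q * a := by
      have h := (hkey (2^a - 1)).1
      rw [show 2^a - 1 + 1 = 2^a by omega, st_two_pow, st_two_pow_sub_one] at h
      rw [bFun_eq_st, show n - 2^(a+k) + 1 = (2^a-1) * 2^k + t + 1 by omega, h]
      ring
    have hshn : bFun n = shortCount n + bFun (n - 2^(a+k)) := by
      have h := bFun_short n hnpos
      rwa [hsizen, Nat.add_sub_cancel] at h
    have hqa : q * (a+1) = q * a + q := by ring
    constructor
    · rw [hbn, hb₂, hsq]; ring
    · omega
end

section
/- Let n be a nonnegative integer with v(n) = 0. Then every vertex of A(n) has outdegree at most 1; that is, for every x ∈ H(n) there is at most one y ∈ H(n) such that (x, y) is a single-step reduction. -/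
lemma wordVal_cons (d : ℕ) (w : List ℕ) :
    wordVal (d :: w) = d * 2 ^ w.length + wordVal w := rfl

lemma val_lt_pow (w : List ℕ) (h : ∀ d ∈ w, d ≤ 1) : wordVal w < 2 ^ w.length := by
  induction w with
  | nil => simp [wordVal]
  | cons d t ih =>
    have hd : d ≤ 1 := h d (List.mem_cons_self)
    have ht := ih (fun e he => h e (List.mem_cons_of_mem _ he))
    have h1 : d * 2 ^ t.length ≤ 2 ^ t.length := by
      calc d * 2 ^ t.length ≤ 1 * 2 ^ t.length := Nat.mul_le_mul_right _ hd
        _ = 2 ^ t.length := one_mul _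
    simp only [wordVal_cons, List.length_cons, pow_succ]
    omega

lemma eq_of_binary_len : ∀ w w' : List ℕ, (∀ d ∈ w, d ≤ 1) → (∀ d ∈ w', d ≤ 1) →
    w.length = w'.length → wordVal w = wordVal w' → w = w' := by
  intro w
  induction w with
  | nil => intro w' _ _ hl _; cases w' with
    | nil => rfl
    | cons d t => simp at hl
  | cons d t ih =>
    intro w' h h' hl hv
    cases w' with
    | nil => simp at hl
    | cons d' t' =>
      have hlt : t.length = t'.length := by simpa using hl
      have hvt := val_lt_pow t (fun e he => h e (List.mem_cons_of_mem _ he))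
      have hvt' := val_lt_pow t' (fun e he => h' e (List.mem_cons_of_mem _ he))
      rw [hlt] at hvt
      rw [wordVal_cons, wordVal_cons, hlt] at hv
      have hd : d ≤ 1 := h d (List.mem_cons_self)
      have hd' : d' ≤ 1 := h' d' (List.mem_cons_self)
      obtain ⟨hdd, hvv⟩ : d = d' ∧ wordVal t = wordVal t' := by
        interval_cases d <;> interval_cases d' <;> omega
      rw [hdd, ih t' (fun e he => h e (List.mem_cons_of_mem _ he))
        (fun e he => h' e (List.mem_cons_of_mem _ he)) hlt hvv]

lemma binary_unique (w w' : List ℕ) (h : ∀ d ∈ w, d ≤ 1) (h' : ∀ d ∈ w', d ≤ 1)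
    (hh : w.head? ≠ some 0) (hh' : w'.head? ≠ some 0)
    (hv : wordVal w = wordVal w') : w = w' := by
  have key : ∀ u : List ℕ, (∀ d ∈ u, d ≤ 1) → u.head? ≠ some 0 → u ≠ [] →
      2 ^ (u.length - 1) ≤ wordVal u ∧ wordVal u < 2 ^ u.length := by
    intro u hu hhu hne
    cases u with
    | nil => exact absurd rfl hne
    | cons d t =>
      have hd1 : d = 1 := by
        have := hu d (List.mem_cons_self)
        have : d ≠ 0 := by simpa using hhu
        omega
      subst hd1
      refine ⟨by simp [wordVal_cons], val_lt_pow _ hu⟩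
  cases w with
  | nil =>
    cases w' with
    | nil => rfl
    | cons d' t' =>
      obtain ⟨h1, _⟩ := key (d' :: t') h' hh' (by simp)
      have hv0 : wordVal ([] : List ℕ) = 0 := rfl
      have : 0 < 2 ^ ((d' :: t').length - 1) := Nat.pow_pos (by norm_num)
      omega
  | cons d t =>
    cases w' with
    | nil =>
      obtain ⟨h1, _⟩ := key (d :: t) h hh (by simp)
      have hv0 : wordVal ([] : List ℕ) = 0 := rfl
      have : 0 < 2 ^ ((d :: t).length - 1) := Nat.pow_pos (by norm_num)
      omega
    | cons d' t' =>
      obtain ⟨h1, h2⟩ := key (d :: t) h hh (by simp)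
      obtain ⟨h1', h2'⟩ := key (d' :: t') h' hh' (by simp)
      have hlen : (d :: t).length = (d' :: t').length := by
        by_contra hne
        rcases Nat.lt_or_ge (d :: t).length (d' :: t').length with hlt | hge
        · have : 2 ^ (d :: t).length ≤ 2 ^ ((d' :: t').length - 1) :=
            Nat.pow_le_pow_right (by norm_num) (by omega)
          omega
        · have hlt : (d' :: t').length < (d :: t).length := by omega
          have : 2 ^ (d' :: t').length ≤ 2 ^ ((d :: t).length - 1) :=
            Nat.pow_le_pow_right (by norm_num) (by omega)
          omega
      exact eq_of_binary_len _ _ h h' hlen hv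

lemma step_mem_two {a b : List ℕ} (h : Step a b) : 2 ∈ a := by
  rcases h with (⟨x, y, rfl, -⟩ | ⟨y, rfl, -⟩) | ⟨x, y, rfl, -⟩ <;> simp

lemma exists_step : ∀ w : List ℕ, (∀ d ∈ w, d ≤ 2) → 2 ∈ w →
    ∃ z, Step w z ∧ (∀ d ∈ z, d ≤ 2) ∧ wordVal z = wordVal w ∧ (w.head? ≠ some 0 → z.head? ≠ some 0) := by
  intro w
  induction w with
  | nil => intro _ h2; simp at h2
  | cons d t ih =>
    intro hd h2
    have hd2 : d ≤ 2 := hd d (List.mem_cons_self)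
    have hdt : ∀ e ∈ t, e ≤ 2 := fun e he => hd e (List.mem_cons_of_mem _ he)
    by_cases hdeq : d = 2
    · subst hdeq
      refine ⟨1 :: 0 :: t, Or.inl (Or.inr ⟨t, rfl, rfl⟩), ?_, ?_, fun _ => by simp⟩
      · intro e he; simp at he; rcases he with h | h | h
        · omega
        · omega
        · exact hdt e h
      · simp only [wordVal_cons, List.length_cons, pow_succ]; ring
    · -- d ≤ 1
      cases t with
      | nil =>
        exfalso; simp at h2; omega
      | cons e t' =>
        by_cases heeq : e = 2
        · subst heeq
          obtain rfl | rfl : d = 0 ∨ d = 1 := by omega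
          · -- 0 :: 2 :: t'
            refine ⟨1 :: 0 :: t', Or.inl (Or.inl ⟨[], t', by simp, by simp⟩), ?_, ?_, fun _ => by simp⟩
            · intro f hf; simp at hf; rcases hf with h | h | h
              · omega
              · omega
              · exact hdt f (List.mem_cons_of_mem _ h)
            · simp only [wordVal_cons, List.length_cons, pow_succ]; ring
          · -- 1 :: 2 :: t'
            refine ⟨2 :: 0 :: t', Or.inr ⟨[], t', by simp, by simp⟩, ?_, ?_, fun _ => by simp⟩
            · intro f hf; simp at hf; rcases hf with h | h | h
              · omega
              · omega
              · exact hdt f (List.mem_cons_of_mem _ h)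
            · simp only [wordVal_cons, List.length_cons, pow_succ]; ring
        · -- 2 ∈ t, recurse
          have h2t : 2 ∈ e :: t' := by
            rcases List.mem_cons.mp h2 with h | h
            · omega
            · exact h
          obtain ⟨z', hstep, hdig, hval, -⟩ := ih hdt h2t
          have hdall : ∀ f ∈ d :: z', f ≤ 2 := by
            intro f hf; rcases List.mem_cons.mp hf with h | h
            · omega
            · exact hdig f h
          have hdhead : (d :: z').head? ≠ some 0 ∨ True := Or.inr trivial
          rcases hstep with (⟨u, v, hu, hz⟩ | ⟨v, hu, hz⟩) | ⟨u, v, hu, hz⟩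
          · have hl : z'.length = (e :: t').length := by rw [hz, hu]; simp
            refine ⟨d :: z', Or.inl (Or.inl ⟨d :: u, v, by rw [hu]; rfl, by rw [hz]; rfl⟩),
              hdall, ?_, ?_⟩
            · rw [wordVal_cons, wordVal_cons, hval, hl]
            · intro h; simpa using (by simpa using h : d ≠ 0)
          · exfalso; injection hu with h1; omega
          · have hl : z'.length = (e :: t').length := by rw [hz, hu]; simp
            refine ⟨d :: z', Or.inr ⟨d :: u, v, by rw [hu]; rfl, by rw [hz]; rfl⟩,
              hdall, ?_, ?_⟩
            · rw [wordVal_cons, wordVal_cons, hval, hl]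
            · intro h; simpa using (by simpa using h : d ≠ 0)

noncomputable def cstep (w : List ℕ) : List ℕ :=
  if h : (∀ d ∈ w, d ≤ 2) ∧ 2 ∈ w then Classical.choose (exists_step w h.1 h.2) else []

lemma cstep_spec {w : List ℕ} (h1 : ∀ d ∈ w, d ≤ 2) (h2 : 2 ∈ w) :
    Step w (cstep w) ∧ (∀ d ∈ cstep w, d ≤ 2) ∧ wordVal (cstep w) = wordVal w ∧
      (w.head? ≠ some 0 → (cstep w).head? ≠ some 0) := by
  rw [cstep, dif_pos ⟨h1, h2⟩]
  exact Classical.choose_spec (exists_step w h1 h2)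

/-- If `v(n) = 0`, every vertex of `A(n)` has outdegree at most `1`. -/
theorem outdegree_le_one_of_v_eq_zero (n : ℕ) (hv : vFun n = 0)
    (x : List ℕ) (hx : x ∈ Hyp n) (y y' : List ℕ)
    (hy : y ∈ Hyp n) (hy' : y' ∈ Hyp n)
    (hxy : Step x y) (hxy' : Step x y') :
    y = y' := by
  by_contra hne
  have hab : aFun n + 1 ≤ bFun n := by
    have := Nat.sub_eq_zero_iff_le.mp hv
    omega
  have hfin : (Hyp n).Finite := by
    by_contra h
    have : bFun n = 0 := Set.Infinite.ncard h
    omega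
  have hfinarcs : (arcs n).Finite := by
    refine Set.Finite.subset (hfin.prod hfin) ?_
    intro p hp
    exact Set.mem_prod.mpr ⟨hp.1, hp.2.1⟩
  set T : Set (List ℕ) := {w ∈ Hyp n | 2 ∈ w} with hT
  have hTfin : T.Finite := hfin.subset (fun w hw => hw.1)
  -- cstep maps T into Hyp n with a step
  have hcstep_arc : ∀ w ∈ T, (w, cstep w) ∈ arcs n := by
    rintro w ⟨hwH, hw2⟩
    obtain ⟨hd, hhead, hval⟩ := hwH
    obtain ⟨hs, hd', hval', hhead'⟩ := cstep_spec hd hw2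
    exact ⟨⟨hd, hhead, hval⟩, ⟨hd', hhead' hhead, by rw [hval', hval]⟩, hs⟩
  set S : Set (List ℕ × List ℕ) := (fun w => (w, cstep w)) '' T with hSdef
  have hSsub : S ⊆ arcs n := by
    rintro p ⟨w, hw, rfl⟩
    exact hcstep_arc w hw
  have hScard : S.ncard = T.ncard :=
    Set.ncard_image_of_injective _ (fun a b hab => congrArg Prod.fst hab)
  -- the extra arc
  set z : List ℕ := if y = cstep x then y' else y with hzdef
  have hz_ne : z ≠ cstep x := by
    rw [hzdef]
    split_ifs with h
    · rw [← h]; exact fun h' => hne h'.symm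
    · exact h
  have hz_arc : (x, z) ∈ arcs n := by
    rw [hzdef]; split_ifs with h
    · exact ⟨hx, hy', hxy'⟩
    · exact ⟨hx, hy, hxy⟩
  have hz_not_S : (x, z) ∉ S := by
    rintro ⟨w, hw, hwe⟩
    have h1 : w = x := congrArg Prod.fst hwe
    have h2 : cstep w = z := congrArg Prod.snd hwe
    exact hz_ne (h1 ▸ h2.symm)
  have hSfin : S.Finite := hfinarcs.subset hSsub
  have hins : insert (x, z) S ⊆ arcs n := by
    rintro p hp
    rcases Set.mem_insert_iff.mp hp with rfl | hp
    · exact hz_arc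
    · exact hSsub hp
  have haF : T.ncard + 1 ≤ aFun n := by
    have h1 : (insert (x, z) S).ncard = S.ncard + 1 :=
      Set.ncard_insert_of_notMem hz_not_S hSfin
    have h2 : (insert (x, z) S).ncard ≤ (arcs n).ncard :=
      Set.ncard_le_ncard hins hfinarcs
    rw [h1, hScard] at h2
    exact h2
  -- bFun n ≤ T.ncard + 1
  set D : Set (List ℕ) := {w ∈ Hyp n | 2 ∉ w} with hD
  have hDsub : D.Subsingleton := by
    rintro w ⟨⟨hwd, hwh, hwv⟩, hw2⟩ w' ⟨⟨hwd', hwh', hwv'⟩, hw2'⟩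
    refine binary_unique w w' ?_ ?_ hwh hwh' (by rw [hwv, hwv'])
    · intro d hd
      have := hwd d hd
      have : d ≠ 2 := fun h => hw2 (h ▸ hd)
      omega
    · intro d hd
      have := hwd' d hd
      have : d ≠ 2 := fun h => hw2' (h ▸ hd)
      omega
  have hDcard : D.ncard ≤ 1 := by
    rcases Set.eq_empty_or_nonempty D with h | ⟨w, hw⟩
    · simp [h]
    · have : D = {w} := Set.eq_singleton_iff_unique_mem.mpr ⟨hw, fun u hu => hDsub hu hw⟩
      simp [this]
  have hHyp_eq : Hyp n = T ∪ D := by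
    ext w
    constructor
    · intro hw
      by_cases h2 : 2 ∈ w
      · exact Or.inl ⟨hw, h2⟩
      · exact Or.inr ⟨hw, h2⟩
    · rintro (hw | hw) <;> exact hw.1
  have hbF : bFun n ≤ T.ncard + 1 := by
    have := Set.ncard_union_le T D
    have hle : bFun n ≤ T.ncard + D.ncard := by
      rw [bFun, hHyp_eq]; exact Set.ncard_union_le T D
    omega
  -- x ∈ T
  omega
end
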